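/- Let D be a small category and R a commutative ring. For every diagram X of R-modules, the canonical map ε_X : ⊕_{x ∈ U(colim_D X)} P_{T_x} → X (induced by the adjoint projection maps of the orbits T_x over points x of U(colim_D X)) is P'-epic: for every orbit T and every map P_T → X there is a factorization P_T → ⊕_x P_{T_x} → X through ε_X. -/

import Mathlib

open CategoryTheory CategoryTheory.Limits

universe u

variable (D : Type u) [SmallCategory D] (R : Type u) [CommRing R]

/-- A `D`-diagram of sets is an orbit if its colimit is a point. -/
def IsOrbit (T : D ⥤ Type u) : Prop :=
  Nonempty (colimit T) ∧ Subsingleton (colimit T)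

/-- The objectwise free `R`-module functor on diagrams. -/
noncomputable abbrev freeD : (D ⥤ Type u) ⥤ (D ⥤ ModuleCat.{u} R) :=
  (Functor.whiskeringRight D _ _).obj (ModuleCat.free R)

/-- The objectwise forgetful functor on diagrams. -/
abbrev forgetD : (D ⥤ ModuleCat.{u} R) ⥤ (D ⥤ Type u) :=
  (Functor.whiskeringRight D _ _).obj (forget _)

/-- The objectwise free-forgetful adjunction on diagrams. -/
noncomputable def adjD : freeD D R ⊣ forgetD D R :=
  Adjunction.whiskerRight D (ModuleCat.adj R)

variable {D R}

/-- The canonical map from the underlying diagram of sets of `X` to the constant diagram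
on the underlying set of `colim_D X`. -/
noncomputable def toColim (X : D ⥤ ModuleCat.{u} R) :
    (forgetD D R).obj X ⟶ (Functor.const D).obj ((forget _).obj (colimit X)) :=
  Functor.whiskerRight (colimit.cocone X).ι (forget _) ≫
    (Functor.constComp D (colimit X) (forget _)).hom

/-- The orbit `T_x = * ×_{U(colim_D X)} UX` over a point `x` of `U(colim_D X)`. -/
noncomputable def orbitOver (X : D ⥤ ModuleCat.{u} R)
    (x : (forget _).obj (colimit X)) : D ⥤ Type u :=
  pullback (toColim X)
    ((Functor.const D).map (TypeCat.ofHom (fun _ => x) : PUnit.{u+1} ⟶ (forget _).obj (colimit X)))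

/-- The projection `π_x : T_x ⟶ UX`. -/
noncomputable def projOrbit (X : D ⥤ ModuleCat.{u} R)
    (x : (forget _).obj (colimit X)) : orbitOver X x ⟶ (forgetD D R).obj X :=
  pullback.fst _ _

/-- The canonical map `ε_X : ⊕_{x ∈ U(colim_D X)} P_{T_x} ⟶ X`, induced by the adjoints
of the projections of the orbits over the points of `U(colim_D X)`, is `P'`-epic: every
map `P_T ⟶ X` with `T` an orbit factors through `ε_X`. -/
theorem epsilon_is_Pprime_epic (X : D ⥤ ModuleCat.{u} R) (T : D ⥤ Type u)
    (hT : IsOrbit D T) (φ : (freeD D R).obj T ⟶ X) :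
    ∃ ψ : (freeD D R).obj T ⟶ ∐ (fun x : (forget _).obj (colimit X) =>
        (freeD D R).obj (orbitOver X x)),
      ψ ≫ Limits.Sigma.desc
        (fun x => ((adjD D R).homEquiv (orbitOver X x) X).symm (projOrbit X x)) = φ := by
  obtain ⟨⟨pt⟩, hsub⟩ := hT
  haveI := hsub
  set f := (adjD D R).homEquiv T X φ with hf
  set c := f ≫ toColim X with hcdef
  set dsc := colimit.desc T ⟨_, c⟩ with hdsc
  set x := dsc pt with hx
  have hc : ∀ d (t : T.obj d), c.app d t = x := by
    intro d t
    have h1 := ConcreteCategory.congr_hom (colimit.ι_desc ⟨_, c⟩ d) t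
    rw [← h1]
    exact congrArg dsc (Subsingleton.elim _ _)
  let g : T ⟶ (Functor.const D).obj PUnit.{u+1} := { app := fun d => TypeCat.ofHom (fun _ => PUnit.unit) }
  have hcomm : f ≫ toColim X = g ≫ (Functor.const D).map
      (TypeCat.ofHom (fun _ => x) : PUnit.{u+1} ⟶ (forget _).obj (colimit X)) := by
    ext d t
    exact hc d t
  let h : T ⟶ orbitOver X x := pullback.lift f g hcomm
  refine ⟨(freeD D R).map h ≫ Sigma.ι (fun y : (forget _).obj (colimit X) => (freeD D R).obj (orbitOver X y)) x, ?_⟩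
  rw [Category.assoc, Sigma.ι_desc, ← Adjunction.homEquiv_naturality_left_symm]
  have hfst : h ≫ projOrbit X x = f := pullback.lift_fst _ _ _
  rw [hfst, hf]
  simp
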